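/- (Quantitative Grover lower bound, abstract form of Theorem 1.) Let M, N, T be positive integers, f : Fin M → Fin N, and k : Fin T → ℕ. Let ψ₀ be a unit vector in EuclideanSpace ℂ (Fin M), let U_1, …, U_T be unitary operators on EuclideanSpace ℂ (Fin M), and for each x ∈ Fin N and t ∈ Fin T let S_{x,t} ⊆ Fin M be such that every z ∈ Fin M belongs to S_{x,t} for at most k_t values of x. Let P_{x,t} be the sign-flip operator of S_{x,t}, and define for each x the final state ψ_x = U_T P_{x,T} ⋯ U_1 P_{x,1} ψ₀. Define the average success probability p = N^{−1} ∑_{x ∈ Fin N} ∑_{z : f(z) = x} |ψ_x z|². Then N − 1 ≤ 2·√N · ∑_{t=1}^{T} √(k_t) + N·√(1 − p). In particular, if p is bounded below by a positive constant then ∑_t √(k_t) = Ω(√N). -/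

import Mathlib

/-!
Hybrid argument. Compare each oracle run `ψ x` with the oracle-free run
`φ t = U_t ⋯ U_1 ψ₀`. Since all the maps are isometries, `‖ψ x - φ T‖` is at most the sum over
the queries of `‖P x t (φ t) - φ t‖ = 2 · (mass of φ t on S x t)`; as each `z` lies in at most
`k t` of the sets `S x t`, Cauchy–Schwarz bounds the sum over `x` of these by `2 √N √(k t)`.
On the other hand the single state `φ T` has success probabilities `q x` summing to `1`, so
`N - 1 ≤ ∑ x, √(1 - q x)`, while `√(1 - q x) ≤ √(1 - p x) + ‖ψ x - φ T‖` because the mass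
outside `f⁻¹ x` is a seminorm, and `∑ x, √(1 - p x) ≤ N √(1 - p)` by Cauchy–Schwarz again.
-/

open Finset

theorem List.foldl_ofFn_eq_of_succ {α : Type*} {n : ℕ} (g : Fin n → α → α) (A : ℕ → α)
    (hA : ∀ i : Fin n, A (i + 1) = g i (A i)) :
    (List.ofFn g).foldl (fun v f => f v) (A 0) = A n := by
  induction n with
  | zero => rfl
  | succ n ih =>
    rw [List.ofFn_succ_last, List.foldl_append, ih _ fun i => hA i.castSucc]
    exact (hA (Fin.last n)).symm

theorem dist_foldl_ofFn_le {X : Type*} [PseudoMetricSpace X] {n : ℕ} (F : Fin n → X → X)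
    (hF : ∀ t, LipschitzWith 1 (F t)) (φ : ℕ → X) :
    dist ((List.ofFn F).foldl (fun x g => g x) (φ 0)) (φ n) ≤
      ∑ t : Fin n, dist (F t (φ t)) (φ (t + 1)) := by
  induction n with
  | zero => simp
  | succ n ih =>
    rw [List.ofFn_succ_last, List.foldl_append, Fin.sum_univ_castSucc]
    set x := (List.ofFn fun i => F i.castSucc).foldl (fun x g => g x) (φ 0)
    set G := F (Fin.last n)
    calc dist (G x) (φ (n + 1)) ≤ dist (G x) (G (φ n)) + dist (G (φ n)) (φ (n + 1)) :=
          dist_triangle _ _ _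
      _ ≤ dist x (φ n) + dist (G (φ n)) (φ (n + 1)) := by
          gcongr; simpa using (hF _).dist_le_mul x (φ n)
      _ ≤ _ := add_le_add (ih _ fun t => hF _) le_rfl

def evolution {X : Type*} {T : ℕ} (U : Fin T → X → X) (v : X) : ℕ → X
  | 0 => v
  | t + 1 => if h : t < T then U ⟨t, h⟩ (evolution U v t) else evolution U v t

theorem evolution_succ {X : Type*} {T : ℕ} (U : Fin T → X → X) (v : X) (t : Fin T) :
    evolution U v (t + 1) = U t (evolution U v t) := by
  simp [evolution]

theorem norm_evolution {E : Type*} [SeminormedAddGroup E] {U : Fin T → E → E}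
    (hU : ∀ t w, ‖U t w‖ = ‖w‖) (v : E) (t : ℕ) : ‖evolution U v t‖ = ‖v‖ := by
  induction t with
  | zero => rfl
  | succ t ih => rw [evolution]; split_ifs <;> simp [hU, ih]

theorem sum_sum_le_mul_sum_of_card_le {α ι : Type*} [Fintype α] [Fintype ι] [DecidableEq ι]
    (S : α → Finset ι) {k : ℕ} (hk : ∀ z, #{x | z ∈ S x} ≤ k) {w : ι → ℝ} (hw : ∀ z, 0 ≤ w z) :
    ∑ x, ∑ z ∈ S x, w z ≤ k * ∑ z, w z := by
  calc ∑ x, ∑ z ∈ S x, w z = ∑ z, #{x | z ∈ S x} * w z := by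
        rw [sum_comm' (t' := univ) (s' := fun z => {x | z ∈ S x}) (by simp)]
        simp only [sum_const, nsmul_eq_mul]
    _ ≤ ∑ z, k * w z := by
        gcongr with z
        · exact hw z
        · exact_mod_cast hk z
    _ = k * ∑ z, w z := (mul_sum _ _ _).symm

theorem sum_le_sqrt_card_mul_sqrt_sum_sq {α : Type*} [Fintype α] (a : α → ℝ) :
    ∑ x, a x ≤ √(Fintype.card α) * √(∑ x, a x ^ 2) := by
  simpa using Real.sum_mul_le_sqrt_mul_sqrt univ (fun _ => 1) a

theorem card_sub_one_le_sum_sqrt_one_sub {α : Type*} [Fintype α] {q : α → ℝ}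
    (hq : ∀ x, 0 ≤ q x) (hq_sum : ∑ x, q x = 1) :
    (Fintype.card α : ℝ) - 1 ≤ ∑ x, √(1 - q x) := by
  have hq_le (x : α) : q x ≤ 1 := hq_sum ▸ single_le_sum (fun y _ => hq y) (mem_univ x)
  calc (Fintype.card α : ℝ) - 1 = ∑ x, (1 - q x) := by simp [sum_sub_distrib, hq_sum]
    _ ≤ ∑ x, √(1 - q x) := sum_le_sum fun x _ => Real.le_sqrt_self_iff.2 (by linarith [hq x])

theorem sum_sqrt_one_sub_le {α : Type*} [Fintype α] {p : α → ℝ} (hp : ∀ x, p x ≤ 1) :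
    ∑ x, √(1 - p x) ≤ Fintype.card α * √(1 - (Fintype.card α : ℝ)⁻¹ * ∑ x, p x) := by
  rcases isEmpty_or_nonempty α with hα | hα
  · simp
  set N : ℝ := (Fintype.card α : ℝ)
  have hN : 0 < N := by positivity
  calc ∑ x, √(1 - p x) ≤ √N * √(∑ x, √(1 - p x) ^ 2) := sum_le_sqrt_card_mul_sqrt_sum_sq _
    _ = √N * √(N * (1 - N⁻¹ * ∑ x, p x)) := by
        simp only [fun x => Real.sq_sqrt (sub_nonneg.2 (hp x)), sum_sub_distrib]
        field_simp
        simp [N]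
    _ = N * √(1 - N⁻¹ * ∑ x, p x) := by
        rw [Real.sqrt_mul hN.le, ← mul_assoc, Real.mul_self_sqrt hN.le]

section EuclideanSpace

variable {𝕜 ι : Type*} [RCLike 𝕜] [Fintype ι]

theorem sqrt_sum_norm_sq_le_norm (A : Finset ι) (v : EuclideanSpace 𝕜 ι) :
    √(∑ z ∈ A, ‖v z‖ ^ 2) ≤ ‖v‖ := by
  rw [EuclideanSpace.norm_eq]
  exact Real.sqrt_le_sqrt <|
    sum_le_sum_of_subset_of_nonneg (subset_univ A) fun _ _ _ => by positivity

theorem sqrt_sum_norm_sq_le_add_norm_sub (A : Finset ι) (a b : EuclideanSpace 𝕜 ι) :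
    √(∑ z ∈ A, ‖a z‖ ^ 2) ≤ √(∑ z ∈ A, ‖b z‖ ^ 2) + ‖a - b‖ := by
  let restrict (v : EuclideanSpace 𝕜 ι) : EuclideanSpace 𝕜 A := WithLp.toLp 2 fun z : A => v z
  have norm_restrict (v : EuclideanSpace 𝕜 ι) : ‖restrict v‖ = √(∑ z ∈ A, ‖v z‖ ^ 2) := by
    rw [EuclideanSpace.norm_eq, ← sum_coe_sort A]
  calc √(∑ z ∈ A, ‖a z‖ ^ 2) = ‖restrict a‖ := (norm_restrict a).symm
    _ ≤ ‖restrict b‖ + ‖restrict a - restrict b‖ := norm_le_norm_add_norm_sub' _ _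
    _ ≤ √(∑ z ∈ A, ‖b z‖ ^ 2) + ‖a - b‖ := by
        have restrict_sub : restrict a - restrict b = restrict (a - b) := rfl
        rw [restrict_sub, norm_restrict, norm_restrict]
        gcongr
        exact sqrt_sum_norm_sq_le_norm A (a - b)

variable [DecidableEq ι]

def IsSignFlip (S : Finset ι) (P : EuclideanSpace 𝕜 ι → EuclideanSpace 𝕜 ι) : Prop :=
  ∀ φ z, P φ z = if z ∈ S then -φ z else φ z

variable {S : Finset ι} {P : EuclideanSpace 𝕜 ι → EuclideanSpace 𝕜 ι}

theorem IsSignFlip.isometry (hP : IsSignFlip S P) : Isometry P := by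
  unfold IsSignFlip at hP
  refine Isometry.of_dist_eq fun a b => ?_
  simp only [EuclideanSpace.dist_eq, hP]
  congr 1
  refine sum_congr rfl fun z _ => ?_
  split_ifs <;> simp only [dist_neg_neg]

theorem IsSignFlip.norm_apply_sub_sq (hP : IsSignFlip S P) (φ : EuclideanSpace 𝕜 ι) :
    ‖P φ - φ‖ ^ 2 = 4 * ∑ z ∈ S, ‖φ z‖ ^ 2 := by
  have hz (z : ι) : ‖(P φ - φ) z‖ ^ 2 = if z ∈ S then 4 * ‖φ z‖ ^ 2 else 0 := by
    rw [PiLp.sub_apply, hP]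
    split_ifs
    · rw [← neg_add', norm_neg, ← two_mul, norm_mul, RCLike.norm_two]; ring
    · simp
  rw [EuclideanSpace.norm_sq_eq, sum_congr rfl fun z _ => hz z, sum_ite_mem, univ_inter, mul_sum]

theorem sum_norm_sub_le_of_isSignFlip {α : Type*} [Fintype α] {S : α → Finset ι}
    {P : α → EuclideanSpace 𝕜 ι → EuclideanSpace 𝕜 ι} (hP : ∀ x, IsSignFlip (S x) (P x)) {k : ℕ}
    (hk : ∀ z, #{x | z ∈ S x} ≤ k) (φ : EuclideanSpace 𝕜 ι) :
    ∑ x, ‖P x φ - φ‖ ≤ 2 * √(Fintype.card α) * √k * ‖φ‖ := by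
  have hsq : ∑ x, ‖P x φ - φ‖ ^ 2 ≤ 2 ^ 2 * k * ‖φ‖ ^ 2 :=
    calc ∑ x, ‖P x φ - φ‖ ^ 2 = 4 * ∑ x, ∑ z ∈ S x, ‖φ z‖ ^ 2 := by
          simp only [(hP _).norm_apply_sub_sq, mul_sum]
      _ ≤ 4 * (k * ∑ z, ‖φ z‖ ^ 2) := by
          gcongr
          exact sum_sum_le_mul_sum_of_card_le S hk fun _ => by positivity
      _ = 2 ^ 2 * k * ‖φ‖ ^ 2 := by rw [EuclideanSpace.norm_sq_eq]; ring
  calc ∑ x, ‖P x φ - φ‖ ≤ √(Fintype.card α) * √(∑ x, ‖P x φ - φ‖ ^ 2) :=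
        sum_le_sqrt_card_mul_sqrt_sum_sq _
    _ ≤ √(Fintype.card α) * √(2 ^ 2 * k * ‖φ‖ ^ 2) := by gcongr
    _ = 2 * √(Fintype.card α) * √k * ‖φ‖ := by
        rw [Real.sqrt_mul (by positivity), Real.sqrt_mul (by positivity), Real.sqrt_sq two_pos.le,
          Real.sqrt_sq (norm_nonneg φ)]
        ring

end EuclideanSpace

section SuccessProbability

variable {𝕜 ι α : Type*} [RCLike 𝕜] [Fintype ι] [DecidableEq α]

def successProb (f : ι → α) (v : EuclideanSpace 𝕜 ι) (x : α) : ℝ :=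
  ∑ z ∈ univ.filter fun z => f z = x, ‖v z‖ ^ 2

variable (f : ι → α) {v : EuclideanSpace 𝕜 ι}

theorem successProb_nonneg (x : α) : 0 ≤ successProb f v x :=
  sum_nonneg fun _ _ => by positivity

theorem one_sub_successProb (hv : ‖v‖ = 1) (x : α) :
    1 - successProb f v x = ∑ z ∈ univ.filter fun z => f z ≠ x, ‖v z‖ ^ 2 := by
  rw [← one_pow 2, ← hv, EuclideanSpace.norm_sq_eq, ← sum_filter_add_sum_filter_not univ
    (fun z => f z = x), successProb, add_sub_cancel_left]

theorem successProb_le_one (hv : ‖v‖ = 1) (x : α) : successProb f v x ≤ 1 := by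
  rw [← sub_nonneg, one_sub_successProb f hv]
  exact sum_nonneg fun _ _ => by positivity

theorem sum_successProb [Fintype α] (hv : ‖v‖ = 1) : ∑ x, successProb f v x = 1 := by
  rw [← one_pow 2, ← hv, EuclideanSpace.norm_sq_eq]
  exact sum_fiberwise_of_maps_to (fun z _ => mem_univ (f z)) _

theorem sqrt_one_sub_successProb_le {a b : EuclideanSpace 𝕜 ι} (ha : ‖a‖ = 1) (hb : ‖b‖ = 1)
    (x : α) : √(1 - successProb f a x) ≤ √(1 - successProb f b x) + ‖a - b‖ := by
  rw [one_sub_successProb f ha, one_sub_successProb f hb]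
  exact sqrt_sum_norm_sq_le_add_norm_sub _ a b

theorem card_sub_one_le_mul_sqrt_add_sum_norm_sub [Fintype α] {ψ : α → EuclideanSpace 𝕜 ι}
    (hψ : ∀ x, ‖ψ x‖ = 1) {φ : EuclideanSpace 𝕜 ι} (hφ : ‖φ‖ = 1) :
    (Fintype.card α : ℝ) - 1 ≤
      Fintype.card α * √(1 - (Fintype.card α : ℝ)⁻¹ * ∑ x, successProb f (ψ x) x) +
        ∑ x, ‖ψ x - φ‖ :=
  calc (Fintype.card α : ℝ) - 1 ≤ ∑ x, √(1 - successProb f φ x) :=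
        card_sub_one_le_sum_sqrt_one_sub (successProb_nonneg f) (sum_successProb f hφ)
    _ ≤ ∑ x, (√(1 - successProb f (ψ x) x) + ‖ψ x - φ‖) :=
        sum_le_sum fun x _ => by
          simpa only [norm_sub_rev] using sqrt_one_sub_successProb_le f hφ (hψ x) x
    _ ≤ _ := by
        rw [sum_add_distrib]
        gcongr
        exact sum_sqrt_one_sub_le fun x => successProb_le_one f (hψ x) x

end SuccessProbability

theorem groverLowerBound_general (M N T : ℕ)
    (f : Fin M → Fin N) (k : Fin T → ℕ)
    (ψ₀ : EuclideanSpace ℂ (Fin M)) (hψ₀ : ‖ψ₀‖ = 1)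
    (U : Fin T → (EuclideanSpace ℂ (Fin M) ≃ₗᵢ[ℂ] EuclideanSpace ℂ (Fin M)))
    (S : Fin N → Fin T → Finset (Fin M))
    (hk : ∀ (t : Fin T) (z : Fin M),
      (Finset.univ.filter fun x : Fin N => z ∈ S x t).card ≤ k t)
    (P : Fin N → Fin T → (EuclideanSpace ℂ (Fin M) →ₗ[ℂ] EuclideanSpace ℂ (Fin M)))
    (hP : ∀ (x : Fin N) (t : Fin T) (φ : EuclideanSpace ℂ (Fin M)) (z : Fin M),
      P x t φ z = if z ∈ S x t then -φ z else φ z)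
    (ψ : Fin N → EuclideanSpace ℂ (Fin M))
    (hψ : ∀ x, ψ x = (List.ofFn fun t : Fin T =>
        fun v : EuclideanSpace ℂ (Fin M) => U t (P x t v)).foldl (fun v f => f v) ψ₀)
    (p : ℝ)
    (hp : p = (N : ℝ)⁻¹ * ∑ x : Fin N,
        ∑ z ∈ Finset.univ.filter fun z : Fin M => f z = x, ‖ψ x z‖ ^ 2) :
    (N : ℝ) - 1 ≤ 2 * Real.sqrt N * (∑ t : Fin T, Real.sqrt (k t)) +
      (N : ℝ) * Real.sqrt (1 - p) := by
  set φ := evolution (fun t => ⇑(U t)) ψ₀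
  have hφ (t : ℕ) : ‖φ t‖ = 1 := (norm_evolution (fun t => (U t).norm_map) ψ₀ t).trans hψ₀
  have hUP (x : Fin N) (t : Fin T) : Isometry fun v => U t (P x t v) :=
    (U t).isometry.comp (IsSignFlip.isometry (hP x t))
  have hψ_norm (x : Fin N) : ‖ψ x‖ = 1 := by
    rw [hψ x]
    refine (congrArg norm (List.foldl_ofFn_eq_of_succ _ (evolution _ ψ₀)
      (evolution_succ _ ψ₀))).trans ?_
    exact (norm_evolution (fun t => (hUP x t).norm_map_of_map_zero (by simp)) ψ₀ T).trans hψ₀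
  have hψ_sub (x : Fin N) : ‖ψ x - φ T‖ ≤ ∑ t : Fin T, ‖P x t (φ t) - φ t‖ := by
    rw [← dist_eq_norm, hψ x]
    refine (dist_foldl_ofFn_le _ (fun t => (hUP x t).lipschitz) φ).trans_eq ?_
    simp [φ, evolution_succ, dist_eq_norm, ← map_sub]
  have hstep (t : Fin T) : ∑ x, ‖P x t (φ t) - φ t‖ ≤ 2 * √N * √(k t) := by
    simpa [hφ] using sum_norm_sub_le_of_isSignFlip (fun x => hP x t) (hk t) (φ t)
  have hmain := card_sub_one_le_mul_sqrt_add_sum_norm_sub f hψ_norm (hφ T)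
  rw [Fintype.card_fin, show (N : ℝ)⁻¹ * ∑ x, successProb f (ψ x) x = p from hp.symm] at hmain
  calc (N : ℝ) - 1 ≤ N * √(1 - p) + ∑ x, ‖ψ x - φ T‖ := hmain
    _ ≤ N * √(1 - p) + ∑ x, ∑ t, ‖P x t (φ t) - φ t‖ := by gcongr with x; exact hψ_sub x
    _ = N * √(1 - p) + ∑ t, ∑ x, ‖P x t (φ t) - φ t‖ := by rw [sum_comm]
    _ ≤ N * √(1 - p) + ∑ t, 2 * √N * √(k t) := by gcongr with t; exact hstep t
    _ = _ := by rw [← mul_sum]; ring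

/-- Theorem 1 of the paper, abstract quantitative form: with the oracle states
`ψ x = U_T P_{x,T} ⋯ U_1 P_{x,1} ψ₀` (where `P x t` is the sign-flip operator
of `S x t`, each `z` lying in `S x t` for at most `k t` values of `x`) and
average success probability `p = N⁻¹ ∑_x ∑_{z : f z = x} |ψ x z|²`, one has
`N - 1 ≤ 2√N · ∑_t √(k t) + N·√(1 - p)`; hence constant success probability
forces `∑_t √(k t) = Ω(√N)`. -/
theorem groverLowerBound (M N T : ℕ) (hM : 0 < M) (hN : 0 < N) (hT : 0 < T)
    (f : Fin M → Fin N) (k : Fin T → ℕ)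
    (ψ₀ : EuclideanSpace ℂ (Fin M)) (hψ₀ : ‖ψ₀‖ = 1)
    (U : Fin T → (EuclideanSpace ℂ (Fin M) ≃ₗᵢ[ℂ] EuclideanSpace ℂ (Fin M)))
    (S : Fin N → Fin T → Finset (Fin M))
    (hk : ∀ (t : Fin T) (z : Fin M),
      (Finset.univ.filter fun x : Fin N => z ∈ S x t).card ≤ k t)
    (P : Fin N → Fin T → (EuclideanSpace ℂ (Fin M) →ₗ[ℂ] EuclideanSpace ℂ (Fin M)))
    (hP : ∀ (x : Fin N) (t : Fin T) (φ : EuclideanSpace ℂ (Fin M)) (z : Fin M),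
      P x t φ z = if z ∈ S x t then -φ z else φ z)
    (ψ : Fin N → EuclideanSpace ℂ (Fin M))
    (hψ : ∀ x, ψ x = (List.ofFn fun t : Fin T =>
        fun v : EuclideanSpace ℂ (Fin M) => U t (P x t v)).foldl (fun v f => f v) ψ₀)
    (p : ℝ)
    (hp : p = (N : ℝ)⁻¹ * ∑ x : Fin N,
        ∑ z ∈ Finset.univ.filter fun z : Fin M => f z = x, ‖ψ x z‖ ^ 2) :
    (N : ℝ) - 1 ≤ 2 * Real.sqrt N * (∑ t : Fin T, Real.sqrt (k t)) +
      (N : ℝ) * Real.sqrt (1 - p) :=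
  groverLowerBound_general M N T f k ψ₀ hψ₀ U S hk P hP ψ hψ p hp
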